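/- arXiv:1906.09916 — 2 statements merged into one kernel-verified Lean document; each statement's English description precedes it below -/
import Mathlib

section
/- Let p be a prime and n ≥ 1. A vector y ∈ ℚ_p^n is very well multiplicatively approximable if and only if there exist γ with 0 < γ < 1/(n+1) and vectors t = (t₀, …, t_n) ∈ ℤ_{≥0}^{n+1} with t = Σᵢ tᵢ taking arbitrarily large values such that δ(g_t u_y D^{n+1}) ≤ p^{-γ t}. -/
/-!
Both directions compare integer solutions of `|q₀ + q·y|_p ≤ Π_+(q̃)^{-(1+ε)}` with short vectors
of `g_t u_y D^{n+1}`.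

Given such a solution `q̃` with `Π_+(q̃)` large, let `tᵢ` be `s` plus the number of base-`p` digits
of `qᵢ`. Then `g_t u_y q̃` has archimedean norm at most `p^{-s}` and `p`-adic norm at most `1`, and
`Σ tᵢ ≤ (1 + ε) log_p Π_+(q̃)`, so `s` may be taken a fixed proportion of `Σ tᵢ`.

Conversely, rescaling a vector of `ℤ[1/p]^{n+1}` of content at most `p^{-γt}` by a power of `p`
does not change its content and makes it an integer vector `q̃` with `|q₀ + q·y|_p ≤ p^{-t}` and
`|qᵢ| ≪ p^{tᵢ - γt}`. Since `∏ᵢ max(p^{tᵢ - γt}, 1) ≤ p^{(1-γ)t}`, this gives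
`Π_+(q̃) ≪ p^{(1-γ)t}`. These solutions are infinitely many unless `q₀ + q·y = 0` has a nonzero
integer solution, and then its multiples already make `y` very well multiplicatively approximable.
-/

open MeasureTheory Metric
open scoped ENNReal NNReal

namespace PadicDioph

variable (p : ℕ) [Fact p.Prime]

noncomputable instance : MeasurableSpace ℚ_[p] := borel _
instance : BorelSpace ℚ_[p] := ⟨rfl⟩

/-- Membership in `ℤ[1/p]`, viewed inside `ℚ`. -/
def IsZInvP (q : ℚ) : Prop := ∃ (z : ℤ) (k : ℕ), q = (z : ℚ) / (p : ℚ) ^ k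

/-- Sup norm (max of archimedean absolute values) of a finite tuple of rationals. -/
noncomputable def supNormR {m : ℕ} (q : Fin m → ℚ) : ℝ := ⨆ i, |(q i : ℝ)|

/-- Sup of the `p`-adic absolute values of a finite tuple of rationals. -/
noncomputable def supNormP {m : ℕ} (q : Fin m → ℚ) : ℝ := ⨆ i, ‖((q i : ℚ_[p]))‖

/-- Sup norm of an integer tuple together with an extra integer coordinate. -/
noncomputable def supNormZ {n : ℕ} (q0 : ℤ) (q : Fin n → ℤ) : ℝ :=
  max |(q0 : ℝ)| (⨆ i, |((q i : ℤ) : ℝ)|)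

/-- The classical Diophantine exponent `w(y)` of `y ∈ ℚ_p^n`: the supremum of all `v > 0`
such that `|q₀ + q·y|_p ≤ ‖(q₀,q)‖_∞^{-v}` has infinitely many integer solutions. -/
noncomputable def wExp {n : ℕ} (y : Fin n → ℚ_[p]) : ℝ≥0∞ :=
  ⨆ (v : ℝ) (_ : 0 < v ∧
    {qq : ℤ × (Fin n → ℤ) |
      ‖((qq.1 : ℚ_[p]) + ∑ i, (qq.2 i : ℚ_[p]) * y i)‖ ≤
        (supNormZ qq.1 qq.2) ^ (-v)}.Infinite), ENNReal.ofReal v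

/-- `y` is very well approximable if `w(y) > n + 1`. -/
def IsVWA {n : ℕ} (y : Fin n → ℚ_[p]) : Prop :=
  ENNReal.ofReal ((n : ℝ) + 1) < wExp p y

/-- The defining condition of the exponent `w_p`: there are solutions
`q̃ = (q₀, q) ∈ ℤ[1/p]^{n+1}` of `|q·y + q₀|_p < (‖q‖_p ‖q̃‖_∞)^{-v} ‖q̃‖_∞^{-1}`
with `‖q‖_p ‖q̃‖_∞` arbitrarily large. -/
def WpCond {n : ℕ} (y : Fin n → ℚ_[p]) (v : ℝ) : Prop :=
  ∀ T : ℝ, ∃ (q0 : ℚ) (q : Fin n → ℚ),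
    IsZInvP p q0 ∧ (∀ i, IsZInvP p (q i)) ∧
    T < supNormP p q * supNormR (Fin.cons q0 q) ∧
    ‖(∑ i, (q i : ℚ_[p]) * y i) + (q0 : ℚ_[p])‖ <
      (supNormP p q * supNormR (Fin.cons q0 q)) ^ (-v) * (supNormR (Fin.cons q0 q))⁻¹

/-- The exponent `w_p(y)`. -/
noncomputable def wpExp {n : ℕ} (y : Fin n → ℚ_[p]) : ℝ≥0∞ :=
  ⨆ (v : ℝ) (_ : 0 < v ∧ WpCond p y v), ENNReal.ofReal v

/-- `Π_+` of a tuple of rationals: the product of `|q_i|_∞` over the nonzero coordinates. -/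
noncomputable def piPlusQ {m : ℕ} (q : Fin m → ℚ) : ℝ :=
  ∏ i, (if q i = 0 then 1 else |(q i : ℝ)|)

/-- `Π_+` of `(q₀, q)` with integer coordinates. -/
noncomputable def piPlusZ {n : ℕ} (q0 : ℤ) (q : Fin n → ℤ) : ℝ :=
  (if q0 = 0 then 1 else |(q0 : ℝ)|) * ∏ i, (if q i = 0 then 1 else |((q i : ℤ) : ℝ)|)

/-- `y ∈ ℚ_p^n` is very well multiplicatively approximable. -/
def IsVWMA {n : ℕ} (y : Fin n → ℚ_[p]) : Prop :=
  ∃ ε : ℝ, 0 < ε ∧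
    {qq : ℤ × (Fin n → ℤ) |
      ‖((qq.1 : ℚ_[p]) + ∑ i, (qq.2 i : ℚ_[p]) * y i)‖ ≤
        (piPlusZ qq.1 qq.2) ^ (-(1 + ε))}.Infinite

/-- A measure on `ℚ_p^n` is strongly extremal if almost every point is not VWMA. -/
def StronglyExtremal {n : ℕ} (μ : Measure (Fin n → ℚ_[p])) : Prop :=
  ∀ᵐ y ∂μ, ¬ IsVWMA p y

/-- `δ(g_t u_y D^{n+1})` for the one-parameter flow: `g_t` has `p`-adic component
`diag(p^{-t},1,…,1)` and archimedean component `p^{-t/(n+1)}·Id`. -/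
noncomputable def deltaOne {n : ℕ} (y : Fin n → ℚ_[p]) (t : ℕ) : ℝ :=
  sInf { c : ℝ | ∃ qt : Fin (n + 1) → ℚ, (∀ i, IsZInvP p (qt i)) ∧ qt ≠ 0 ∧
    c = ((p : ℝ) ^ (-(t : ℝ) / ((n : ℝ) + 1)) * supNormR qt) *
        max (‖(((p : ℚ_[p]) ^ t)⁻¹ * ((qt 0 : ℚ_[p]) + ∑ i : Fin n, (qt i.succ : ℚ_[p]) * y i))‖)
            (⨆ i : Fin n, ‖((qt i.succ : ℚ_[p]))‖) }

/-- The exponent `γ(y)`. -/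
noncomputable def gammaExp {n : ℕ} (y : Fin n → ℚ_[p]) : ℝ :=
  sSup {c : ℝ | 0 ≤ c ∧ ∀ N : ℕ, ∃ t : ℕ, N ≤ t ∧
    deltaOne p y t ≤ (p : ℝ) ^ (-(c * (t : ℝ)))}

/-- `δ(g_t u_y D^{n+1})` for the multiparameter flow: for `t = (t₀,…,t_n)` with
`T = Σ tᵢ`, the `p`-adic component of `g_t` is `diag(p^{-T},1,…,1)` and the archimedean
component is `diag(p^{-t₀},…,p^{-t_n})`. -/
noncomputable def deltaMulti {n : ℕ} (y : Fin n → ℚ_[p]) (t : Fin (n + 1) → ℕ) : ℝ :=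
  sInf { c : ℝ | ∃ qt : Fin (n + 1) → ℚ, (∀ i, IsZInvP p (qt i)) ∧ qt ≠ 0 ∧
    c = (⨆ i, (p : ℝ) ^ (-((t i : ℝ))) * |(qt i : ℝ)|) *
        max (‖(((p : ℚ_[p]) ^ (∑ i, t i))⁻¹ *
              ((qt 0 : ℚ_[p]) + ∑ i : Fin n, (qt i.succ : ℚ_[p]) * y i))‖)
            (⨆ i : Fin n, ‖((qt i.succ : ℚ_[p]))‖) }

/-- The support of a measure on a metric space. -/
def measSupp {X : Type*} [MetricSpace X] [MeasurableSpace X] (μ : Measure X) : Set X :=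
  {x | ∀ r : ℝ, 0 < r → 0 < μ (ball x r)}

/-- `‖f‖_{μ,B}`. -/
noncomputable def muSupNorm {X : Type*} [MetricSpace X] [MeasurableSpace X]
    (μ : Measure X) (B : Set X) (f : X → ℚ_[p]) : ℝ :=
  sSup {c : ℝ | 0 < μ {x ∈ B | c < ‖f x‖}}

/-- `f` is `(C, α)`-good on `V` with respect to `μ`. -/
def IsGoodOn {X : Type*} [MetricSpace X] [MeasurableSpace X] (μ : Measure X)
    (C a : ℝ) (V : Set X) (f : X → ℚ_[p]) : Prop :=
  ∀ (x₀ : X) (r : ℝ), 0 < r → x₀ ∈ measSupp μ → ball x₀ r ⊆ V →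
    ∀ ε : ℝ, 0 < ε →
      μ {x ∈ ball x₀ r | ‖f x‖ < ε} ≤
        ENNReal.ofReal (C * (ε / muSupNorm p μ (ball x₀ r) f) ^ a) * μ (ball x₀ r)

/-- A metric space is Besicovitch: any family of balls whose centers exhaust a bounded
set `A` admits a countable subfamily covering `A` with multiplicity at most `N`. -/
def IsBesicovitch (X : Type*) [MetricSpace X] : Prop :=
  ∃ N : ℕ, ∀ (A : Set X), Bornology.IsBounded A →
    ∀ F : Set (X × ℝ), (∀ b ∈ F, 0 < b.2) → (∀ x ∈ A, ∃ r : ℝ, (x, r) ∈ F) →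
      ∃ S ⊆ F, S.Countable ∧ (∀ x ∈ A, ∃ b ∈ S, x ∈ ball b.1 b.2) ∧
        ∀ x : X, {b ∈ S | x ∈ ball b.1 b.2}.encard ≤ N

/-- `μ` is `D`-Federer on the open set `U`. -/
def IsDFedererOn {X : Type*} [MetricSpace X] [MeasurableSpace X]
    (μ : Measure X) (D : ℝ) (U : Set X) : Prop :=
  ∀ x ∈ measSupp μ, ∀ r : ℝ, 0 < r → ball x (3 * r) ⊆ U →
    μ (ball x (3 * r)) ≤ ENNReal.ofReal D * μ (ball x r)

/-- `μ` is Federer. -/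
def IsFederer {X : Type*} [MetricSpace X] [MeasurableSpace X] (μ : Measure X) : Prop :=
  ∀ᵐ x ∂μ, ∃ U : Set X, IsOpen U ∧ x ∈ U ∧ 0 < μ U ∧ ∃ D : ℝ, 0 < D ∧ IsDFedererOn μ D U

/-- The pair `(f, μ)` is good: `μ`-a.e. point has a neighbourhood `V` and `C, α > 0`
such that every affine combination `c₀ + Σ cᵢ fᵢ` is `(C, α)`-good on `V` w.r.t. `μ`. -/
def GoodPair {X : Type*} [MetricSpace X] [MeasurableSpace X] {n : ℕ}
    (f : X → (Fin n → ℚ_[p])) (μ : Measure X) : Prop :=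
  ∀ᵐ x ∂μ, ∃ V : Set X, IsOpen V ∧ x ∈ V ∧ ∃ C a : ℝ, 0 < C ∧ 0 < a ∧
    ∀ c0 : ℚ_[p], ∀ c : Fin n → ℚ_[p],
      IsGoodOn p μ C a V (fun x => c0 + ∑ i, c i * f x i)

/-- `(f, μ)` is nonplanar in the affine subspace `L`. -/
def NonplanarIn {X : Type*} [MetricSpace X] [MeasurableSpace X] {n : ℕ}
    (f : X → (Fin n → ℚ_[p])) (μ : Measure X)
    (L : AffineSubspace ℚ_[p] (Fin n → ℚ_[p])) : Prop :=
  ∀ B : Set X, IsOpen B → B.Nonempty → 0 < μ B →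
    affineSpan ℚ_[p] (f '' (B ∩ measSupp μ)) = L

/-- `f` is nondegenerate in the affine subspace `L` at `x`: `f` takes values in `L` and the
span of the partial derivatives of `f` at `x` up to some order is the linear part of `L`. -/
def NondegenerateAt {d n : ℕ} (f : (Fin d → ℚ_[p]) → (Fin n → ℚ_[p]))
    (L : AffineSubspace ℚ_[p] (Fin n → ℚ_[p])) (x : Fin d → ℚ_[p]) : Prop :=
  (∀ u, f u ∈ L) ∧ ∃ m : ℕ,
    Submodule.span ℚ_[p]
      {v : Fin n → ℚ_[p] | ∃ j : ℕ, j ≤ m ∧ 1 ≤ j ∧ ∃ vs : Fin j → (Fin d → ℚ_[p]),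
        v = iteratedFDeriv ℚ_[p] j f x vs} = L.direction

/-- An analytic chart of the `d`-dimensional submanifold `M` of `ℚ_p^n`: an analytic map
`f` on an open set `U`, injective on `U`, immersive, a homeomorphism onto its image, whose
image is a relatively open subset of `M`. -/
def IsChart (d n : ℕ) (M : Set (Fin n → ℚ_[p]))
    (U : Set (Fin d → ℚ_[p])) (f : (Fin d → ℚ_[p]) → (Fin n → ℚ_[p])) : Prop :=
  IsOpen U ∧ AnalyticOnNhd ℚ_[p] f U ∧ Set.InjOn f U ∧
  (∀ x ∈ U, Function.Injective (fderiv ℚ_[p] f x)) ∧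
  (∀ x ∈ U, ∀ V : Set (Fin d → ℚ_[p]), IsOpen V → x ∈ V →
      ∃ W : Set (Fin n → ℚ_[p]), IsOpen W ∧ f x ∈ W ∧ W ∩ f '' U ⊆ f '' (V ∩ U)) ∧
  ∃ W : Set (Fin n → ℚ_[p]), IsOpen W ∧ M ∩ W = f '' U

/-- `M` is a `d`-dimensional analytic submanifold of `ℚ_p^n`. -/
def IsAnalyticSubmanifold (d n : ℕ) (M : Set (Fin n → ℚ_[p])) : Prop :=
  M.Nonempty ∧ ∀ y ∈ M, ∃ (U : Set (Fin d → ℚ_[p])) (f : (Fin d → ℚ_[p]) → (Fin n → ℚ_[p])),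
    IsChart p d n M U f ∧ y ∈ f '' U


open Filter

theorem one_lt_p_real : (1 : ℝ) < p := by exact_mod_cast (Fact.out : p.Prime).one_lt

section ZInvP

variable {p}

theorem IsZInvP.zpow_mul {q : ℚ} (hq : IsZInvP p q) (k : ℤ) : IsZInvP p ((p : ℚ) ^ k * q) := by
  obtain ⟨z, m, rfl⟩ := hq
  obtain ⟨a, b, rfl⟩ : ∃ a b : ℕ, k = a - b := ⟨_, _, (Int.toNat_sub_toNat_neg k).symm⟩
  have hp : (p : ℚ) ≠ 0 := by exact_mod_cast (Fact.out : p.Prime).ne_zero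
  refine ⟨z * (p : ℤ) ^ a, m + b, ?_⟩
  rw [zpow_sub₀ hp, zpow_natCast, zpow_natCast]
  push_cast
  field_simp
  ring

theorem IsZInvP.exists_intCast_eq {q : ℚ} (hq : IsZInvP p q) (h : ‖(q : ℚ_[p])‖ ≤ 1) :
    ∃ z : ℤ, (z : ℚ) = q := by
  obtain ⟨z, m, rfl⟩ := hq
  have hp : (p : ℚ) ^ m ≠ 0 := pow_ne_zero _ (by exact_mod_cast (Fact.out : p.Prime).ne_zero)
  have hz : ‖(z : ℚ_[p])‖ ≤ (p : ℝ) ^ (-m : ℤ) := by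
    have hp' : (0 : ℝ) < (p : ℝ) ^ m := pow_pos (zero_lt_one.trans (one_lt_p_real p)) m
    push_cast at h
    rw [norm_div, norm_pow, Padic.norm_p, inv_pow, div_inv_eq_mul, ← le_div_iff₀ hp'] at h
    rwa [zpow_neg, zpow_natCast, ← one_div]
  obtain ⟨w, rfl⟩ := (Padic.norm_int_le_pow_iff_dvd z m).1 hz
  exact ⟨w, by push_cast; field_simp⟩

end ZInvP

/-- The `p`-adic coordinate `q₀ + q·y` of `u_y q̃`. -/
noncomputable def linForm {n : ℕ} (y : Fin n → ℚ_[p]) (q : Fin (n + 1) → ℚ_[p]) : ℚ_[p] :=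
  q 0 + ∑ i, q i.succ * y i

theorem linForm_smul {n : ℕ} (y : Fin n → ℚ_[p]) (c : ℚ_[p]) (q : Fin (n + 1) → ℚ_[p]) :
    linForm p y (c • q) = c * linForm p y q := by
  simp only [linForm, Pi.smul_apply, smul_eq_mul, mul_add, Finset.mul_sum, mul_assoc]

section PiPlus

variable {m : ℕ}

noncomputable def piPlus (ζ : Fin m → ℤ) : ℝ := ∏ i, max |(ζ i : ℝ)| 1

theorem one_le_piPlus (ζ : Fin m → ℤ) : 1 ≤ piPlus ζ :=
  Finset.one_le_prod fun _ _ => le_max_right _ _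

theorem abs_le_piPlus (ζ : Fin m → ℤ) (i : Fin m) : |(ζ i : ℝ)| ≤ piPlus ζ :=
  Finset.le_prod_max_one (Finset.mem_univ i) fun j => |(ζ j : ℝ)|

theorem _root_.Set.Infinite.exists_lt_piPlus {S : Set (Fin m → ℤ)} (hS : S.Infinite) (M : ℝ) :
    ∃ ζ ∈ S, M < piPlus ζ := by
  by_contra! h
  refine hS ((Set.finite_Icc (-fun _ => ⌈M⌉) fun _ => ⌈M⌉).subset fun ζ hζ => ?_)
  have hζ i : |ζ i| ≤ ⌈M⌉ := by
    exact_mod_cast ((abs_le_piPlus ζ i).trans (h ζ hζ)).trans (Int.le_ceil M)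
  exact ⟨fun i => (abs_le.1 (hζ i)).1, fun i => (abs_le.1 (hζ i)).2⟩

theorem piPlusZ_eq_piPlus_cons {n : ℕ} (q0 : ℤ) (q : Fin n → ℤ) :
    piPlusZ q0 q = piPlus (Fin.cons q0 q : Fin (n + 1) → ℤ) := by
  have key (z : ℤ) : (if z = 0 then 1 else |(z : ℝ)|) = max |(z : ℝ)| 1 := by
    split_ifs with hz
    · simp [hz]
    · exact (max_eq_left (by exact_mod_cast Int.one_le_abs hz)).symm
  simp only [piPlusZ, piPlus, Fin.prod_univ_succ, Fin.cons_zero, Fin.cons_succ, key]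

theorem max_mul_one_mul_max_mul_one_le {a b w : ℝ} (ha : 1 ≤ a) (hb : 1 ≤ b) (hw0 : 0 ≤ w)
    (hw1 : w ≤ 1) : max (a * w) 1 * max (b * w) 1 ≤ max (a * b * w) 1 := by
  rcases le_total (a * w) 1 with h₁ | h₁ <;> rcases le_total (b * w) 1 with h₂ | h₂
  · rw [max_eq_right h₁, max_eq_right h₂, one_mul]
    exact le_max_right _ _
  · rw [max_eq_right h₁, max_eq_left h₂, one_mul]
    exact le_max_of_le_left (by nlinarith)
  · rw [max_eq_left h₁, max_eq_right h₂, mul_one]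
    exact le_max_of_le_left (by nlinarith)
  · rw [max_eq_left h₁, max_eq_left h₂]
    have habw : 0 ≤ a * b * w := by positivity
    exact le_max_of_le_left (by nlinarith [mul_nonneg habw (sub_nonneg.2 hw1)])

theorem prod_max_mul_one_le {ι : Type*} (s : Finset ι) {x : ι → ℝ} (hx : ∀ i, 1 ≤ x i) {w : ℝ}
    (hw0 : 0 ≤ w) (hw1 : w ≤ 1) : ∏ i ∈ s, max (x i * w) 1 ≤ max ((∏ i ∈ s, x i) * w) 1 := by
  classical
  induction s using Finset.induction_on with
  | empty => simp
  | insert a s ha ih =>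
    rw [Finset.prod_insert ha, Finset.prod_insert ha, mul_assoc]
    calc max (x a * w) 1 * ∏ i ∈ s, max (x i * w) 1
        ≤ max (x a * w) 1 * max ((∏ i ∈ s, x i) * w) 1 := by gcongr
      _ ≤ max (x a * ((∏ i ∈ s, x i) * w)) 1 := by
        rw [← mul_assoc]
        exact max_mul_one_mul_max_mul_one_le (hx a) (Finset.one_le_prod fun i _ => hx i) hw0 hw1

theorem piPlus_le {ζ : Fin m → ℤ} {x : Fin m → ℝ} {C w : ℝ} (hC : 1 ≤ C)
    (hx : ∀ i, 1 ≤ x i) (hw0 : 0 ≤ w) (hw1 : w ≤ 1) (hζ : ∀ i, |(ζ i : ℝ)| ≤ C * (x i * w)) :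
    piPlus ζ ≤ C ^ m * max ((∏ i, x i) * w) 1 := by
  calc piPlus ζ ≤ ∏ i, C * max (x i * w) 1 :=
        Finset.prod_le_prod (fun _ _ => by positivity) fun i _ =>
          max_le ((hζ i).trans (by gcongr; exact le_max_left _ _))
            (one_le_mul_of_one_le_of_one_le hC (le_max_right _ _))
    _ = C ^ m * ∏ i, max (x i * w) 1 := by simp [Finset.prod_mul_distrib]
    _ ≤ C ^ m * max ((∏ i, x i) * w) 1 := by
        gcongr
        exact prod_max_mul_one_le _ hx hw0 hw1

theorem piPlus_rpow_le {ζ : Fin m → ℤ} {t : Fin m → ℕ} {b C γ : ℝ} (hb : 1 ≤ b)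
    (hC : 1 ≤ C) (hγ0 : 0 ≤ γ) (hγ1 : γ ≤ 1)
    (hCT : (C ^ m) ^ (1 + γ) ≤ (b ^ γ ^ 2) ^ (∑ i, t i))
    (hζ : ∀ i, |(ζ i : ℝ)| ≤ C * (b ^ t i * b ^ (-(γ * (∑ i, t i : ℕ))))) :
    piPlus ζ ^ (1 + γ) ≤ b ^ (∑ i, t i) := by
  set T := ∑ i, t i
  have hb0 : 0 < b := zero_lt_one.trans_le hb
  have hγT : 0 ≤ (1 - γ) * T := mul_nonneg (by linarith) T.cast_nonneg
  have hprod : (∏ i, b ^ t i) * b ^ (-(γ * T)) = b ^ ((1 - γ) * T) := by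
    rw [Finset.prod_pow_eq_pow_sum, ← Real.rpow_natCast, ← Real.rpow_add hb0]
    congr 1
    ring
  have hpi : piPlus ζ ≤ C ^ m * b ^ ((1 - γ) * T) := by
    have := piPlus_le hC (fun i => one_le_pow₀ hb) (Real.rpow_nonneg hb0.le _)
      (Real.rpow_le_one_of_one_le_of_nonpos hb (by nlinarith [T.cast_nonneg (α := ℝ)])) hζ
    rwa [hprod, max_eq_left (Real.one_le_rpow hb hγT)] at this
  calc piPlus ζ ^ (1 + γ) ≤ (C ^ m * b ^ ((1 - γ) * T)) ^ (1 + γ) := by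
        gcongr
        exact zero_le_one.trans (one_le_piPlus ζ)
    _ = (C ^ m) ^ (1 + γ) * b ^ ((1 - γ ^ 2) * T) := by
        rw [Real.mul_rpow (by positivity) (by positivity), ← Real.rpow_mul hb0.le]
        ring_nf
    _ ≤ (b ^ γ ^ 2) ^ T * b ^ ((1 - γ ^ 2) * T) := by gcongr
    _ = b ^ T := by
        rw [← Real.rpow_mul_natCast hb0.le, ← Real.rpow_add hb0, ← Real.rpow_natCast b T]
        ring_nf

end PiPlus

theorem _root_.Set.infinite_of_forall_exists_pos_lt {α : Type*} {S : Set α} (f : α → ℝ)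
    (h : ∀ δ > 0, ∃ a ∈ S, 0 < f a ∧ f a < δ) : S.Infinite := by
  intro hS
  obtain ⟨a, ha, ha0, -⟩ := h 1 one_pos
  obtain ⟨a, ⟨-, ha⟩, hmin⟩ := Set.exists_min_image {a ∈ S | 0 < f a} f
    (hS.subset (Set.sep_subset _ _)) ⟨a, ha, ha0⟩
  obtain ⟨b, hb, hb0, hlt⟩ := h (f a) ha
  exact (hmin b ⟨hb, hb0⟩).not_gt hlt

section Approximation

variable {n : ℕ}

def multApproxSet (y : Fin n → ℚ_[p]) (ε : ℝ) : Set (Fin (n + 1) → ℤ) :=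
  {ζ | ‖linForm p y fun i => (ζ i : ℚ_[p])‖ ≤ piPlus ζ ^ (-(1 + ε))}

theorem isVWMA_iff (y : Fin n → ℚ_[p]) :
    IsVWMA p y ↔ ∃ ε : ℝ, 0 < ε ∧ (multApproxSet p y ε).Infinite := by
  have key (ε : ℝ) : {qq : ℤ × (Fin n → ℤ) | ‖(qq.1 : ℚ_[p]) + ∑ i, (qq.2 i : ℚ_[p]) * y i‖ ≤
      piPlusZ qq.1 qq.2 ^ (-(1 + ε))} = Fin.consEquiv (fun _ => ℤ) ⁻¹' multApproxSet p y ε := by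
    ext qq
    simp only [Set.mem_ofPred_eq, piPlusZ_eq_piPlus_cons]
    rfl
  simp only [IsVWMA, key]
  refine exists_congr fun ε => and_congr_right fun _ => ⟨fun h => ?_, fun h => ?_⟩
  · exact fun hfin => h (hfin.preimage (Fin.consEquiv _).injective.injOn)
  · exact h.preimage (by simp [(Fin.consEquiv _).surjective.range_eq])

variable {p} {y : Fin n → ℚ_[p]}

theorem mem_multApproxSet_of_le {ζ : Fin (n + 1) → ℤ} {ε : ℝ} {T : ℕ}
    (herr : ‖linForm p y fun i => (ζ i : ℚ_[p])‖ ≤ ((p : ℝ) ^ T)⁻¹)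
    (hsize : piPlus ζ ^ (1 + ε) ≤ (p : ℝ) ^ T) : ζ ∈ multApproxSet p y ε := by
  have hpi := zero_lt_one.trans_le (one_le_piPlus ζ)
  calc ‖linForm p y fun i => (ζ i : ℚ_[p])‖ ≤ ((p : ℝ) ^ T)⁻¹ := herr
    _ ≤ (piPlus ζ ^ (1 + ε))⁻¹ := inv_anti₀ (Real.rpow_pos_of_pos hpi _) hsize
    _ = piPlus ζ ^ (-(1 + ε)) := (Real.rpow_neg hpi.le _).symm

theorem pow_mul_norm_linForm_le_one {ζ : Fin (n + 1) → ℤ} {ε : ℝ} (hζ : ζ ∈ multApproxSet p y ε)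
    {T : ℕ} (hT : (T : ℝ) ≤ (1 + ε) * Real.logb p (piPlus ζ)) :
    (p : ℝ) ^ T * ‖linForm p y fun i => (ζ i : ℚ_[p])‖ ≤ 1 := by
  have hp1 := one_lt_p_real p
  have hp : (0 : ℝ) < p := zero_lt_one.trans hp1
  have hpi := zero_lt_one.trans_le (one_le_piPlus ζ)
  calc (p : ℝ) ^ T * ‖linForm p y fun i => (ζ i : ℚ_[p])‖
      ≤ piPlus ζ ^ (1 + ε) * piPlus ζ ^ (-(1 + ε)) := by
        refine mul_le_mul ?_ hζ (norm_nonneg _) (by positivity)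
        rw [← Real.rpow_natCast, ← Real.rpow_logb hp hp1.ne' hpi, ← Real.rpow_mul hp.le]
        exact Real.rpow_le_rpow_of_exponent_le hp1.le (by linarith)
    _ = 1 := by rw [← Real.rpow_add hpi, add_neg_cancel, Real.rpow_zero]

theorem isVWMA_of_linForm_eq_zero {ζ : Fin (n + 1) → ℤ} (hζ : ζ ≠ 0)
    (h : linForm p y (fun i => (ζ i : ℚ_[p])) = 0) : IsVWMA p y := by
  refine (isVWMA_iff p y).2 ⟨1, one_pos, Set.infinite_of_injective_forall_mem
    (f := fun k : ℕ => ((k : ℤ) + 1) • ζ) ?_ fun k => ?_⟩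
  · intro a b hab
    simpa using smul_left_injective ℤ hζ hab
  · have hk : (fun i => ((((k : ℤ) + 1) • ζ) i : ℚ_[p])) =
        ((k : ℚ_[p]) + 1) • fun i => (ζ i : ℚ_[p]) := by
      ext i
      simp
    simp only [multApproxSet, Set.mem_ofPred_eq, hk, linForm_smul, h, mul_zero, norm_zero]
    exact Real.rpow_nonneg (zero_le_one.trans (one_le_piPlus _)) _

end Approximation

section Content

variable {n : ℕ} (y : Fin n → ℚ_[p]) (t : Fin (n + 1) → ℕ)

/-- `‖(g_t u_y q̃)^{(p)}‖_p`. -/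
noncomputable def padicPart (q : Fin (n + 1) → ℚ) : ℝ :=
  max ‖((p : ℚ_[p]) ^ (∑ i, t i))⁻¹ * linForm p y fun i => (q i : ℚ_[p])‖
    (⨆ i : Fin n, ‖(q i.succ : ℚ_[p])‖)

/-- The content `c(g_t u_y q̃)`. -/
noncomputable def content (q : Fin (n + 1) → ℚ) : ℝ :=
  (⨆ i, (p : ℝ) ^ (-(t i : ℝ)) * |(q i : ℝ)|) * padicPart p y t q

theorem deltaMulti_eq :
    deltaMulti p y t = sInf (content p y t '' {q | (∀ i, IsZInvP p (q i)) ∧ q ≠ 0}) := by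
  simp only [deltaMulti, content, padicPart, linForm, Set.image, Set.mem_ofPred_eq, and_assoc,
    eq_comm]

theorem content_nonneg (q : Fin (n + 1) → ℚ) : 0 ≤ content p y t q :=
  mul_nonneg (Real.iSup_nonneg fun _ => by positivity)
    ((norm_nonneg _).trans (le_max_left _ _))

variable {p y t}

theorem deltaMulti_le_content {q : Fin (n + 1) → ℚ} (hq : ∀ i, IsZInvP p (q i)) (hq0 : q ≠ 0) :
    deltaMulti p y t ≤ content p y t q := by
  rw [deltaMulti_eq]
  exact csInf_le ⟨0, by rintro _ ⟨q, -, rfl⟩; exact content_nonneg p y t q⟩ ⟨q, ⟨hq, hq0⟩, rfl⟩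

theorem exists_content_lt_of_deltaMulti_lt {w : ℝ} (h : deltaMulti p y t < w) :
    ∃ q : Fin (n + 1) → ℚ, (∀ i, IsZInvP p (q i)) ∧ q ≠ 0 ∧ content p y t q < w := by
  rw [deltaMulti_eq] at h
  have hne : (content p y t '' {q | (∀ i, IsZInvP p (q i)) ∧ q ≠ 0}).Nonempty :=
    ⟨_, 1, ⟨fun _ => ⟨1, 0, by simp⟩, one_ne_zero⟩, rfl⟩
  obtain ⟨_, ⟨q, ⟨hq, hq0⟩, rfl⟩, hlt⟩ := exists_lt_of_csInf_lt hne h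
  exact ⟨q, hq, hq0, hlt⟩

theorem norm_pow_inv_mul (T : ℕ) (x : ℚ_[p]) : ‖((p : ℚ_[p]) ^ T)⁻¹ * x‖ = (p : ℝ) ^ T * ‖x‖ := by
  rw [norm_mul, norm_inv, norm_pow, Padic.norm_p, inv_pow, inv_inv]

theorem pow_mul_norm_linForm_le_padicPart (q : Fin (n + 1) → ℚ) :
    (p : ℝ) ^ (∑ i, t i) * ‖linForm p y fun i => (q i : ℚ_[p])‖ ≤ padicPart p y t q :=
  (norm_pow_inv_mul _ _).symm.le.trans (le_max_left _ _)

theorem norm_succ_le_padicPart (q : Fin (n + 1) → ℚ) (i : Fin n) :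
    ‖(q i.succ : ℚ_[p])‖ ≤ padicPart p y t q :=
  (le_ciSup (f := fun j : Fin n => ‖(q j.succ : ℚ_[p])‖) (Set.finite_range _).bddAbove i).trans
    (le_max_right _ _)

theorem abs_mul_padicPart_le_of_content_lt {q : Fin (n + 1) → ℚ} {w : ℝ}
    (h : content p y t q < w) (i : Fin (n + 1)) :
    |(q i : ℝ)| * padicPart p y t q ≤ (p : ℝ) ^ t i * w := by
  have hp : (0 : ℝ) < p := zero_lt_one.trans (one_lt_p_real p)
  have hA : (p : ℝ) ^ (-(t i : ℝ)) * |(q i : ℝ)| ≤ ⨆ i, (p : ℝ) ^ (-(t i : ℝ)) * |(q i : ℝ)| :=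
    le_ciSup (f := fun i => (p : ℝ) ^ (-(t i : ℝ)) * |(q i : ℝ)|) (Set.finite_range _).bddAbove i
  rw [Real.rpow_neg hp.le, Real.rpow_natCast, inv_mul_le_iff₀ (by positivity)] at hA
  have hB : 0 ≤ padicPart p y t q := (norm_nonneg _).trans (le_max_left _ _)
  calc |(q i : ℝ)| * padicPart p y t q
      ≤ (p : ℝ) ^ t i * (⨆ i, (p : ℝ) ^ (-(t i : ℝ)) * |(q i : ℝ)|) * padicPart p y t q := by
        gcongr
    _ = (p : ℝ) ^ t i * content p y t q := by rw [content, mul_assoc]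
    _ ≤ (p : ℝ) ^ t i * w := by gcongr

theorem padicPart_pos {q : Fin (n + 1) → ℚ} (hq : q ≠ 0) : 0 < padicPart p y t q := by
  refine ((norm_nonneg _).trans (le_max_left _ _)).lt_of_ne fun h => hq ?_
  have hsucc (i : Fin n) : q i.succ = 0 := by
    exact_mod_cast norm_le_zero_iff.1 ((norm_succ_le_padicPart q i).trans h.ge)
  have hlin : ‖linForm p y fun i => (q i : ℚ_[p])‖ ≤ 0 := by
    have := (pow_mul_norm_linForm_le_padicPart (y := y) (t := t) q).trans h.ge
    exact nonpos_of_mul_nonpos_right this (pow_pos (zero_lt_one.trans (one_lt_p_real p)) _)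
  have h0 : q 0 = 0 := by
    simpa [linForm, hsucc] using norm_le_zero_iff.1 hlin
  ext i
  exact Fin.cases h0 hsucc i

theorem norm_le_mul_padicPart {K : ℝ} (hK1 : 1 ≤ K) (hK : ∀ j, ‖y j‖ ≤ K)
    (q : Fin (n + 1) → ℚ) (i : Fin (n + 1)) : ‖(q i : ℚ_[p])‖ ≤ K * padicPart p y t q := by
  have hB : ‖linForm p y fun i => (q i : ℚ_[p])‖ ≤ padicPart p y t q :=
    (le_mul_of_one_le_left (norm_nonneg _) (one_le_pow₀ (one_lt_p_real p).le)).trans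
      (pow_mul_norm_linForm_le_padicPart q)
  have hB0 : 0 ≤ padicPart p y t q := (norm_nonneg _).trans hB
  have hsucc (j : Fin n) : ‖(q j.succ : ℚ_[p])‖ ≤ K * padicPart p y t q :=
    (norm_succ_le_padicPart q j).trans (le_mul_of_one_le_left hB0 hK1)
  refine Fin.cases ?_ hsucc i
  have hsum : ‖∑ j, (q j.succ : ℚ_[p]) * y j‖ ≤ K * padicPart p y t q :=
    IsUltrametricDist.norm_sum_le_of_forall_le_of_nonneg (by positivity) fun j _ => by
      rw [norm_mul, mul_comm K]
      exact mul_le_mul (norm_succ_le_padicPart q j) (hK j) (norm_nonneg _) hB0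
  have h0 : (q 0 : ℚ_[p]) =
      linForm p y (fun i => (q i : ℚ_[p])) + -∑ j, (q j.succ : ℚ_[p]) * y j := by
    simp [linForm]
  rw [h0]
  refine (Padic.nonarchimedean _ _).trans (max_le ?_ (by rwa [norm_neg]))
  exact hB.trans (le_mul_of_one_le_left hB0 hK1)

end Content

theorem exists_one_le_forall_norm_le {ι E : Type*} [Fintype ι] [SeminormedAddGroup E]
    (y : ι → E) : ∃ K : ℝ, 1 ≤ K ∧ ∀ j, ‖y j‖ ≤ K :=
  ⟨1 + ∑ j, ‖y j‖, le_add_of_nonneg_right (Finset.sum_nonneg fun _ _ => norm_nonneg _), fun j =>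
    (Finset.single_le_sum (fun j _ => norm_nonneg (y j)) (Finset.mem_univ j)).trans
      (le_add_of_nonneg_left zero_le_one)⟩

section Backward

variable {p} {n : ℕ} {y : Fin n → ℚ_[p]} {t : Fin (n + 1) → ℕ}

theorem exists_intCast_eq_zpow_mul {K : ℝ} (hK1 : 1 ≤ K) (hK : ∀ j, ‖y j‖ ≤ K)
    {q : Fin (n + 1) → ℚ} (hq : ∀ i, IsZInvP p (q i)) {k : ℤ}
    (hk : K * padicPart p y t q ≤ (p : ℝ) ^ k) :
    ∃ ζ : Fin (n + 1) → ℤ, ∀ i, (ζ i : ℚ) = (p : ℚ) ^ k * q i := by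
  have hp : (0 : ℝ) < p := zero_lt_one.trans (one_lt_p_real p)
  choose ζ hζ using fun i => ((hq i).zpow_mul k).exists_intCast_eq <| by
    rw [Rat.cast_mul, Rat.cast_zpow, Rat.cast_natCast, norm_mul, Padic.norm_p_zpow, zpow_neg,
      inv_mul_le_iff₀ (zpow_pos hp k), mul_one]
    exact (norm_le_mul_padicPart hK1 hK q i).trans hk
  exact ⟨ζ, hζ⟩

theorem exists_int_of_deltaMulti_le (y : Fin n → ℚ_[p]) :
    ∃ C : ℝ, 1 ≤ C ∧ ∀ (t : Fin (n + 1) → ℕ) (w : ℝ), 0 < w → deltaMulti p y t ≤ w →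
      ∃ ζ : Fin (n + 1) → ℤ, ζ ≠ 0 ∧
        ‖linForm p y fun i => (ζ i : ℚ_[p])‖ ≤ ((p : ℝ) ^ (∑ i, t i))⁻¹ ∧
        ∀ i, |(ζ i : ℝ)| ≤ C * ((p : ℝ) ^ t i * w) := by
  have hp1 := one_lt_p_real p
  have hp : (0 : ℝ) < p := zero_lt_one.trans hp1
  obtain ⟨K, hK1, hK⟩ := exists_one_le_forall_norm_le y
  refine ⟨2 * p * K, by nlinarith, fun t w hw hδ => ?_⟩
  obtain ⟨q, hq, hq0, hlt⟩ := exists_content_lt_of_deltaMulti_lt (w := 2 * w) (by linarith)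
  set B := padicPart p y t q
  have hB : 0 < B := padicPart_pos hq0
  -- `p ^ k` is the least power of `p` that is at least `K * B`; rescaling `q` by it makes `q`
  -- integral and leaves its content unchanged
  obtain ⟨m, hm, hm'⟩ := exists_mem_Ioc_zpow (mul_pos (by positivity : (0 : ℝ) < K) hB) hp1
  set k := m + 1
  have hk : (p : ℝ) ^ k ≤ p * (K * B) := by
    rw [zpow_add_one₀ hp.ne', mul_comm _ (p : ℝ)]
    exact mul_le_mul_of_nonneg_left hm.le hp.le
  obtain ⟨ζ, hζ⟩ := exists_intCast_eq_zpow_mul hK1 hK hq hm'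
  have hζp : (fun i => (ζ i : ℚ_[p])) = ((p : ℚ_[p]) ^ k) • fun i => (q i : ℚ_[p]) := by
    ext i
    simpa using congrArg (fun r : ℚ => (r : ℚ_[p])) (hζ i)
  have hζr (i) : (ζ i : ℝ) = (p : ℝ) ^ k * q i := by
    simpa using congrArg (fun r : ℚ => (r : ℝ)) (hζ i)
  refine ⟨ζ, fun h => hq0 (funext fun i => ?_), ?_, fun i => ?_⟩
  · have hpk : (p : ℚ) ^ k ≠ 0 := zpow_ne_zero _ (by exact_mod_cast (Fact.out : p.Prime).ne_zero)
    have := hζ i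
    rw [h, Pi.zero_apply, Int.cast_zero, eq_comm, mul_eq_zero] at this
    exact this.resolve_left hpk
  · rw [← one_div, le_div_iff₀ (by positivity), mul_comm, hζp, linForm_smul, norm_mul,
      Padic.norm_p_zpow, mul_left_comm, zpow_neg, inv_mul_le_iff₀ (zpow_pos hp k), mul_one]
    exact (pow_mul_norm_linForm_le_padicPart q).trans
      ((le_mul_of_one_le_left hB.le hK1).trans hm')
  · rw [hζr, abs_mul, abs_of_pos (zpow_pos hp k)]
    calc (p : ℝ) ^ k * |(q i : ℝ)| ≤ p * K * (|(q i : ℝ)| * B) := by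
          nlinarith [abs_nonneg (q i : ℝ)]
      _ ≤ p * K * ((p : ℝ) ^ t i * (2 * w)) :=
          mul_le_mul_of_nonneg_left (abs_mul_padicPart_le_of_content_lt hlt i) (by positivity)
      _ = 2 * p * K * ((p : ℝ) ^ t i * w) := by ring

theorem isVWMA_of_forall_exists_deltaMulti_le {γ : ℝ} (hγ0 : 0 < γ) (hγ1 : γ < 1)
    (h : ∀ N : ℕ, ∃ t : Fin (n + 1) → ℕ, N ≤ ∑ i, t i ∧
      deltaMulti p y t ≤ (p : ℝ) ^ (-(γ * ((∑ i, t i : ℕ) : ℝ)))) : IsVWMA p y := by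
  by_cases h0 : ∃ ζ : Fin (n + 1) → ℤ, ζ ≠ 0 ∧ linForm p y (fun i => (ζ i : ℚ_[p])) = 0
  · obtain ⟨ζ, hζ, hlin⟩ := h0
    exact isVWMA_of_linForm_eq_zero hζ hlin
  push Not at h0
  have hp1 := one_lt_p_real p
  obtain ⟨C, hC, hCδ⟩ := exists_int_of_deltaMulti_le y
  refine (isVWMA_iff p y).2 ⟨γ, hγ0, Set.infinite_of_forall_exists_pos_lt
    (fun ζ => ‖linForm p y fun i => (ζ i : ℚ_[p])‖) fun δ hδ => ?_⟩
  have hev : ∀ᶠ T : ℕ in atTop,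
      (C ^ (n + 1)) ^ (1 + γ) ≤ ((p : ℝ) ^ γ ^ 2) ^ T ∧ ((p : ℝ) ^ T)⁻¹ < δ :=
    ((tendsto_pow_atTop_atTop_of_one_lt (Real.one_lt_rpow hp1 (by positivity))).eventually_ge_atTop
      _).and ((tendsto_inv_atTop_zero.comp (tendsto_pow_atTop_atTop_of_one_lt hp1)).eventually
        (gt_mem_nhds hδ))
  obtain ⟨N, hN⟩ := eventually_atTop.1 hev
  obtain ⟨t, hNT, hδt⟩ := h N
  obtain ⟨hCT, hTδ⟩ := hN _ hNT
  obtain ⟨ζ, hζ0, herr, hζ⟩ := hCδ t _ (Real.rpow_pos_of_pos (by positivity) _) hδt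
  exact ⟨ζ, mem_multApproxSet_of_le herr (piPlus_rpow_le hp1.le hC hγ0.le hγ1.le hCT hζ),
    norm_pos_iff.2 (h0 ζ hζ0), herr.trans_lt hTδ⟩

end Backward

section Forward

variable {p} {n : ℕ} {y : Fin n → ℚ_[p]}

theorem deltaMulti_le_of_int {t : Fin (n + 1) → ℕ} {ζ : Fin (n + 1) → ℤ} (hζ : ζ ≠ 0) {a : ℝ}
    (ha : ∀ i, (p : ℝ) ^ (-(t i : ℝ)) * |(ζ i : ℝ)| ≤ a)
    (herr : (p : ℝ) ^ (∑ i, t i) * ‖linForm p y fun i => (ζ i : ℚ_[p])‖ ≤ 1) :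
    deltaMulti p y t ≤ a := by
  have hq0 : (fun i => (ζ i : ℚ)) ≠ 0 := fun h => hζ (funext fun i => by simpa using congrFun h i)
  have ha0 : 0 ≤ a := (mul_nonneg (by positivity) (abs_nonneg _)).trans (ha 0)
  calc deltaMulti p y t ≤ content p y t fun i => (ζ i : ℚ) :=
        deltaMulti_le_content (fun i => ⟨ζ i, 0, by simp⟩) hq0
    _ ≤ a * 1 := by
        refine mul_le_mul (ciSup_le (by simpa using ha)) (max_le ?_ ?_)
          ((norm_nonneg _).trans (le_max_left _ _)) ha0
        · simpa only [Rat.cast_intCast, norm_pow_inv_mul] using herr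
        · exact Real.iSup_le (fun i => by simpa using Padic.norm_int_le_one (ζ i.succ)) zero_le_one
    _ = a := mul_one a

theorem rpow_neg_mul_abs_le {b : ℝ} (hb : 1 < b) (z : ℤ) (s : ℕ) :
    b ^ (-((⌈Real.logb b (max |(z : ℝ)| 1)⌉₊ + s : ℕ) : ℝ)) * |(z : ℝ)| ≤ b ^ (-(s : ℝ)) := by
  have hb0 : 0 < b := zero_lt_one.trans hb
  set c := ⌈Real.logb b (max |(z : ℝ)| 1)⌉₊
  have hz : |(z : ℝ)| ≤ b ^ (c : ℝ) :=
    calc |(z : ℝ)| ≤ max |(z : ℝ)| 1 := le_max_left _ _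
      _ = b ^ Real.logb b (max |(z : ℝ)| 1) := (Real.rpow_logb hb0 hb.ne' (by positivity)).symm
      _ ≤ b ^ (c : ℝ) := Real.rpow_le_rpow_of_exponent_le hb.le (Nat.le_ceil _)
  calc b ^ (-((c + s : ℕ) : ℝ)) * |(z : ℝ)| ≤ b ^ (-((c + s : ℕ) : ℝ)) * b ^ (c : ℝ) := by gcongr
    _ = b ^ (-(s : ℝ)) := by
        rw [← Real.rpow_add hb0]
        push_cast
        ring_nf

theorem exists_deltaMulti_le_of_mem_multApproxSet {ε : ℝ} {ζ : Fin (n + 1) → ℤ}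
    (hζ : ζ ∈ multApproxSet p y ε) (s : ℕ)
    (hs : ((n : ℝ) + 1) * (s + 1) ≤ ε * Real.logb p (piPlus ζ)) :
    ∃ t : Fin (n + 1) → ℕ, s ≤ ∑ i, t i ∧
      ((∑ i, t i : ℕ) : ℝ) ≤ (1 + ε) * Real.logb p (piPlus ζ) ∧
      deltaMulti p y t ≤ (p : ℝ) ^ (-(s : ℝ)) := by
  have hp1 := one_lt_p_real p
  set L := Real.logb p (piPlus ζ)
  set ℓ : Fin (n + 1) → ℝ := fun i => Real.logb p (max |(ζ i : ℝ)| 1)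
  have hL : L = ∑ i, ℓ i := Real.logb_prod _ _ fun i _ => by positivity
  -- `t i` is `s` plus the number of base-`p` digits of `ζ i`
  set t : Fin (n + 1) → ℕ := fun i => ⌈ℓ i⌉₊ + s
  have hζ0 : ζ ≠ 0 := by
    rintro rfl
    simp only [piPlus, Pi.zero_apply, Int.cast_zero, abs_zero, zero_le_one, sup_of_le_right,
      Finset.prod_const_one, Real.logb_one, mul_zero, L] at hs
    nlinarith
  have hT : ((∑ i, t i : ℕ) : ℝ) ≤ (1 + ε) * L := by
    have hceil (i) : (⌈ℓ i⌉₊ : ℝ) ≤ ℓ i + 1 :=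
      (Nat.ceil_lt_add_one (Real.logb_nonneg hp1 (le_max_right _ _))).le
    calc ((∑ i, t i : ℕ) : ℝ) = ∑ i, (⌈ℓ i⌉₊ : ℝ) + (n + 1) * s := by
          simp [t, Finset.sum_add_distrib]
      _ ≤ ∑ i, (ℓ i + 1) + (n + 1) * s := by gcongr with i; exact hceil i
      _ = L + (n + 1) * (s + 1) := by
          rw [hL, Finset.sum_add_distrib]
          simp
          ring
      _ ≤ (1 + ε) * L := by linarith
  have hsT : s ≤ ∑ i, t i :=
    (Nat.le_add_left s _).trans (Finset.single_le_sum (f := t) (by simp) (Finset.mem_univ 0))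
  exact ⟨t, hsT, hT, deltaMulti_le_of_int hζ0 (fun i => rpow_neg_mul_abs_le hp1 (ζ i) s)
    (pow_mul_norm_linForm_le_one hζ hT)⟩

theorem exists_forall_deltaMulti_le_of_isVWMA (h : IsVWMA p y) :
    ∃ γ : ℝ, 0 < γ ∧ γ < 1 / ((n : ℝ) + 1) ∧
      ∀ N : ℕ, ∃ t : Fin (n + 1) → ℕ, N ≤ ∑ i, t i ∧
        deltaMulti p y t ≤ (p : ℝ) ^ (-(γ * ((∑ i, t i : ℕ) : ℝ))) := by
  have hp1 := one_lt_p_real p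
  obtain ⟨ε, hε, hinf⟩ := (isVWMA_iff p y).1 h
  have hn : (0 : ℝ) < n + 1 := by positivity
  refine ⟨ε / (2 * (n + 1) * (1 + ε)), by positivity, ?_, fun N => ?_⟩
  · rw [div_lt_div_iff₀ (by positivity) hn]
    nlinarith
  obtain ⟨ζ, hζ, hbig⟩ := hinf.exists_lt_piPlus ((p : ℝ) ^ (2 * (n + 1) * (N + 2) / ε))
  set L := Real.logb p (piPlus ζ)
  have hL : 2 * (n + 1) * (N + 2) ≤ ε * L := by
    have := (Real.lt_logb_iff_rpow_lt hp1 (zero_lt_one.trans_le (one_le_piPlus ζ))).2 hbig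
    rw [div_lt_iff₀ hε] at this
    linarith
  -- `s` is about half of what `ε` allows, which leaves room for `γ * ∑ i, t i ≤ s`
  set s := ⌈ε * L / (2 * (n + 1))⌉₊
  have hs₁ : ε * L / (2 * (n + 1)) ≤ s := Nat.le_ceil _
  have hs₂ : (s : ℝ) < ε * L / (2 * (n + 1)) + 1 :=
    Nat.ceil_lt_add_one (div_nonneg (by nlinarith) (by positivity))
  have hN : (N : ℝ) + 2 ≤ ε * L / (2 * (n + 1)) := by rw [le_div_iff₀ (by positivity)]; linarith
  obtain ⟨t, hsT, hTL, hδ⟩ := exists_deltaMulti_le_of_mem_multApproxSet hζ s <| by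
    have : ((n : ℝ) + 1) * (ε * L / (2 * (n + 1))) = ε * L / 2 := by field_simp
    nlinarith
  refine ⟨t, le_trans (by exact_mod_cast (by linarith : (N : ℝ) ≤ s)) hsT,
    hδ.trans (Real.rpow_le_rpow_of_exponent_le hp1.le (neg_le_neg ?_))⟩
  calc ε / (2 * (n + 1) * (1 + ε)) * ((∑ i, t i : ℕ) : ℝ)
      ≤ ε / (2 * (n + 1) * (1 + ε)) * ((1 + ε) * L) := by gcongr
    _ = ε * L / (2 * (n + 1)) := by field_simp
    _ ≤ s := hs₁

end Forward

theorem statement8_general (p : ℕ) [Fact p.Prime] (n : ℕ) (y : Fin n → ℚ_[p]) :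
    IsVWMA p y ↔ ∃ γ : ℝ, 0 < γ ∧ γ < 1 / ((n : ℝ) + 1) ∧
      ∀ N : ℕ, ∃ t : Fin (n + 1) → ℕ, N ≤ ∑ i, t i ∧
        deltaMulti p y t ≤ (p : ℝ) ^ (-(γ * ((∑ i, t i : ℕ) : ℝ))) := by
  refine ⟨exists_forall_deltaMulti_le_of_isVWMA, fun ⟨γ, hγ0, hγn, h⟩ => ?_⟩
  have hγ1 : γ < 1 := hγn.trans_le (div_le_one_of_le₀ (by linarith [n.cast_nonneg (α := ℝ)])
    (by positivity))
  exact isVWMA_of_forall_exists_deltaMulti_le hγ0 hγ1 h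

/-- `y ∈ ℚ_p^n` is very well multiplicatively approximable iff there is
`0 < γ < 1/(n+1)` and vectors `t ∈ ℤ_{≥0}^{n+1}` with `Σᵢ tᵢ` arbitrarily large such that
`δ(g_t u_y D^{n+1}) ≤ p^{-γ Σᵢ tᵢ}`. -/
theorem statement8 (p : ℕ) [Fact p.Prime] (n : ℕ) (hn : 1 ≤ n) (y : Fin n → ℚ_[p]) :
    IsVWMA p y ↔ ∃ γ : ℝ, 0 < γ ∧ γ < 1 / ((n : ℝ) + 1) ∧
      ∀ N : ℕ, ∃ t : Fin (n + 1) → ℕ, N ≤ ∑ i, t i ∧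
        deltaMulti p y t ≤ (p : ℝ) ^ (-(γ * ((∑ i, t i : ℕ) : ℝ))) :=
  statement8_general p n y

end PadicDioph
end

section
/- Let p be a prime, n ≥ 1, t = (t₀, …, t_n) ∈ ℤ_{≥0}^{n+1} with t = Σᵢ tᵢ, and 0 < γ < 1/(n+1). Let q̃' = (q₀', q₁', …, q_n') with q₀' ∈ ℤ[1/p] and q₁', …, q_n' ∈ ℤ, and suppose that max_{0 ≤ i ≤ n} p^{-t_i}|q_i'|_∞ ≤ p^{-γt}. Let k = #{i : tᵢ ≥ γt}. Then Π_+(q̃') ≤ p^{(1 - kγ)t}. -/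
open MeasureTheory Metric
open scoped ENNReal NNReal

namespace PadicDioph

variable (p : ℕ) [Fact p.Prime]

theorem piPlusQ_le_rpow_sum {m : ℕ} (q : Fin m → ℚ) {b : ℝ} (hb : 1 ≤ b) (e : Fin m → ℝ)
    (he : ∀ i, 0 ≤ e i) (hq : ∀ i, |(q i : ℝ)| ≤ b ^ e i) :
    piPlusQ q ≤ b ^ ∑ i, e i := by
  rw [Real.rpow_sum_of_pos (by linarith)]
  refine Finset.prod_le_prod (fun i _ => by split_ifs <;> positivity) fun i _ => ?_
  split_ifs
  · exact Real.one_le_rpow hb (he i)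
  · exact hq i

theorem abs_le_rpow_sub_of_rpow_neg_mul_le {b x s t : ℝ} (hb : 0 < b)
    (h : b ^ (-t) * |x| ≤ b ^ (-s)) : |x| ≤ b ^ (t - s) := by
  calc |x| = b ^ t * (b ^ (-t) * |x|) := by
        rw [← mul_assoc, ← Real.rpow_add hb, add_neg_cancel, Real.rpow_zero, one_mul]
    _ ≤ b ^ t * b ^ (-s) := by gcongr
    _ = b ^ (t - s) := by rw [← Real.rpow_add hb, sub_eq_add_neg]

theorem Finset.sum_sub_ite_le_eq_sub_card_mul {ι : Type*} (S : Finset ι) (f : ι → ℝ) (s : ℝ) :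
    ∑ i ∈ S, (f i - if s ≤ f i then s else 0) =
      ∑ i ∈ S, f i - (S.filter (s ≤ f ·)).card * s := by
  rw [Finset.sum_sub_distrib, ← Finset.sum_filter, Finset.sum_const, nsmul_eq_mul]

theorem statement13_general (p : ℕ) [Fact p.Prime] (n : ℕ)
    (t : Fin (n + 1) → ℕ) (γ : ℝ)
    (q : Fin (n + 1) → ℚ)
    (hmax : ∀ i, (p : ℝ) ^ (-((t i : ℝ))) * |(q i : ℝ)| ≤
      (p : ℝ) ^ (-(γ * ((∑ j, t j : ℕ) : ℝ)))) :
    piPlusQ q ≤ (p : ℝ) ^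
      ((1 - ((Finset.univ.filter
          (fun i : Fin (n + 1) => γ * ((∑ j, t j : ℕ) : ℝ) ≤ (t i : ℝ))).card : ℝ) * γ) *
        ((∑ j, t j : ℕ) : ℝ)) := by
  have hp : 1 ≤ (p : ℝ) := by exact_mod_cast (Fact.out : p.Prime).one_lt.le
  set T : ℝ := ((∑ j, t j : ℕ) : ℝ)
  -- `|q i|₊ ≤ p ^ (t i - γ T)` where `γ T ≤ t i`, and the cruder `p ^ t i` elsewhere add up to the
  -- exponent `(1 - k γ) T`.
  set e : Fin (n + 1) → ℝ := fun i => (t i : ℝ) - if γ * T ≤ t i then γ * T else 0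
  have he : ∀ i, 0 ≤ e i := fun i => by
    simp only [e]; split_ifs <;> linarith [(t i).cast_nonneg (α := ℝ)]
  have hq : ∀ i, |(q i : ℝ)| ≤ (p : ℝ) ^ e i := fun i => by
    refine (abs_le_rpow_sub_of_rpow_neg_mul_le (by linarith) (hmax i)).trans
      (Real.rpow_le_rpow_of_exponent_le hp ?_)
    simp only [e]; split_ifs <;> linarith [(t i).cast_nonneg (α := ℝ)]
  calc piPlusQ q ≤ (p : ℝ) ^ ∑ i, e i := piPlusQ_le_rpow_sum q hp e he hq
    _ = _ := by
      rw [Finset.sum_sub_ite_le_eq_sub_card_mul]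
      congr 1
      simp only [T, Nat.cast_sum]
      ring

/-- Let `t = (t₀,…,t_n) ∈ ℤ_{≥0}^{n+1}`, `T = Σᵢ tᵢ`,
`0 < γ < 1/(n+1)`, and `q̃' = (q₀',…,q_n')` with `q₀' ∈ ℤ[1/p]`, `q₁',…,q_n' ∈ ℤ`.
If `p^{-tᵢ}|qᵢ'|_∞ ≤ p^{-γT}` for all `i` and `k = #{i : tᵢ ≥ γT}`, then
`Π₊(q̃') ≤ p^{(1-kγ)T}`. -/
theorem statement13 (p : ℕ) [Fact p.Prime] (n : ℕ) (hn : 1 ≤ n)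
    (t : Fin (n + 1) → ℕ) (γ : ℝ) (hγ0 : 0 < γ) (hγ1 : γ < 1 / ((n : ℝ) + 1))
    (q : Fin (n + 1) → ℚ) (hq0 : IsZInvP p (q 0))
    (hqZ : ∀ i : Fin n, ∃ z : ℤ, q i.succ = (z : ℚ))
    (hmax : ∀ i, (p : ℝ) ^ (-((t i : ℝ))) * |(q i : ℝ)| ≤
      (p : ℝ) ^ (-(γ * ((∑ j, t j : ℕ) : ℝ)))) :
    piPlusQ q ≤ (p : ℝ) ^
      ((1 - ((Finset.univ.filter
          (fun i : Fin (n + 1) => γ * ((∑ j, t j : ℕ) : ℝ) ≤ (t i : ℝ))).card : ℝ) * γ) *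
        ((∑ j, t j : ℕ) : ℝ)) :=
  statement13_general p n t γ q hmax

end PadicDioph
end
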